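/- arXiv:1612.09385 — 3 statements merged into one kernel-verified Lean document; each statement's English description precedes it below -/
import Mathlib

section
/- For real numbers α > 0 and 0 ≤ β < 1, the series S(1,α,β) = ∑_{k=0}^∞ (α + βk)^{k}/k! · e^{-(α+βk)} converges and equals 1/(1-β); in particular it is independent of α. -/
/-!
Write `u α = ∑ α (α + βk)^(k-1)/k! e^(-(α+βk)) = α S(0,α,β)` and `v α = S(1,α,β)`.
Abel's identity `∑ C(n,k) x (x+kz)^(k-1) (y+(n-k)z)^(n-k) = (x+y+nz)^n` says exactly that the
Cauchy product gives `u α * v γ = v (α+γ)`, so `u` is multiplicative and `u (nα) = (u α)^n`.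
A Chernoff bound makes `v`, hence `u ≤ v`, grow subexponentially, and Stirling's bound on the
single term at `k = ⌊α/(1-β)⌋` gives `u α ≥ c/α`; so `(u α)^n` neither grows nor decays
exponentially, which forces `u ≡ 1`. Finally, termwise, `v α - u α = β v (α+β) = β u β * v α`,
that is `v α = 1 + β v α`.
-/

open Finset Real Filter
open scoped Nat

noncomputable def abelPoly (x z : ℝ) : ℕ → ℝ
  | 0 => 1
  | k + 1 => x * (x + z * (k + 1 : ℕ)) ^ k

lemma abelPoly_mul (x z : ℝ) (k : ℕ) :
    abelPoly x z k * (x + z * k) = x * (x + z * k) ^ k := by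
  cases k with
  | zero => simp [abelPoly]
  | succ k => rw [abelPoly, pow_succ]; ring

lemma abelPoly_mul_pow (x z : ℝ) {k n : ℕ} (hk : k ≤ n + 1) :
    abelPoly x z k * (x + z * k) ^ (n + 1 - k) = x * (x + z * k) ^ n := by
  rcases hk.eq_or_lt with rfl | hk
  · simp [abelPoly]
  · obtain ⟨m, rfl⟩ := Nat.exists_eq_add_of_le (Nat.le_of_lt_succ hk)
    rw [show k + m + 1 - k = m + 1 by omega, pow_succ', ← mul_assoc, abelPoly_mul, mul_assoc,
      ← pow_add]

open Polynomial in
lemma sum_neg_one_pow_mul_choose_mul_pow (x z : ℝ) {j n : ℕ} (h : j < n) :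
    ∑ k ∈ range (n + 1), (-1 : ℝ) ^ (n - k) * n.choose k * (x + z * k) ^ j = 0 := by
  have hP : ((C z * X + C x) ^ j).natDegree < n :=
    (natDegree_pow_le_of_le j natDegree_linear_le).trans_lt (by rwa [mul_one])
  have := congr_fun (fwdDiff_iter_eq_zero_of_degree_lt hP) 0
  rw [fwdDiff_iter_eq_sum_shift] at this
  simpa [add_comm x] using this

lemma hasDerivAt_sum_choose_mul_pow (a : ℕ → ℝ) (z y : ℝ) (n : ℕ) :
    HasDerivAt (fun y ↦ ∑ k ∈ range (n + 2), (n + 1).choose k * a k *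
        (y + z * (n + 1 - k : ℕ)) ^ (n + 1 - k))
      ((n + 1) * ∑ k ∈ range (n + 1), n.choose k * a k * (y + z + z * (n - k : ℕ)) ^ (n - k)) y := by
  have hterm (k : ℕ) := (((hasDerivAt_id' y).add_const (z * (n + 1 - k : ℕ))).fun_pow
    (n + 1 - k)).const_mul ((n + 1).choose k * a k)
  refine (HasDerivAt.fun_sum (u := range (n + 2)) fun k _ ↦ hterm k).congr_deriv ?_
  rw [sum_range_succ, mul_sum]
  simp only [Nat.sub_self, Nat.cast_zero, zero_mul, mul_zero, add_zero]
  refine sum_congr rfl fun k hk ↦ ?_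
  have hkn : k ≤ n := Nat.lt_succ_iff.mp (mem_range.mp hk)
  have hchoose : ((n + 1).choose k : ℝ) * (n + 1 - k : ℕ) = (n + 1) * n.choose k := by
    exact_mod_cast (Nat.choose_mul_succ_eq n k).symm.trans (mul_comm _ _)
  rw [show n + 1 - k - 1 = n - k by omega, show (n + 1 - k : ℕ) = n - k + 1 by omega] at *
  push_cast at *
  linear_combination (a k * (y + z + z * (n - k : ℕ)) ^ (n - k)) * hchoose

theorem abel_identity (x z : ℝ) (n : ℕ) (y : ℝ) :
    ∑ k ∈ range (n + 1), n.choose k * abelPoly x z k * (y + z * (n - k : ℕ)) ^ (n - k) =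
      (x + y + z * n) ^ n := by
  induction n generalizing y with
  | zero => simp [abelPoly]
  | succ n ih =>
    set c := x + z * (n + 1 : ℕ)
    have hderiv (y : ℝ) : HasDerivAt (fun y ↦ ∑ k ∈ range (n + 2), (n + 1).choose k *
        abelPoly x z k * (y + z * (n + 1 - k : ℕ)) ^ (n + 1 - k) - (y + c) ^ (n + 1)) 0 y := by
      have hpow := ((hasDerivAt_id' y).add_const c).fun_pow (n + 1)
      refine ((hasDerivAt_sum_choose_mul_pow (abelPoly x z) z y n).sub hpow).congr_deriv ?_
      rw [ih]
      simp only [c]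
      push_cast
      ring
    have hroot : ∑ k ∈ range (n + 2), (n + 1).choose k * abelPoly x z k *
        (-c + z * (n + 1 - k : ℕ)) ^ (n + 1 - k) = 0 := by
      calc _ = ∑ k ∈ range (n + 2),
              x * ((-1) ^ (n + 1 - k) * (n + 1).choose k * (x + z * k) ^ n) := by
            refine sum_congr rfl fun k hk ↦ ?_
            have hk : k ≤ n + 1 := Nat.lt_succ_iff.mp (mem_range.mp hk)
            rw [show -c + z * (n + 1 - k : ℕ) = -(x + z * k) by simp only [c]; push_cast [hk]; ring,
              neg_pow]
            linear_combination (-1) ^ (n + 1 - k) * ((n + 1).choose k : ℝ) * abelPoly_mul_pow x z hk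
        _ = 0 := by rw [← mul_sum, sum_neg_one_pow_mul_choose_mul_pow x z n.lt_succ_self, mul_zero]
    have := is_const_of_deriv_eq_zero (fun y ↦ (hderiv y).differentiableAt)
      (fun y ↦ (hderiv y).deriv) y (-c)
    simp only [hroot, neg_add_cancel, zero_pow n.succ_ne_zero, sub_zero] at this
    rw [sub_eq_zero.mp this]
    simp only [c]
    ring

lemma abelPoly_nonneg {x z : ℝ} (hx : 0 ≤ x) (hz : 0 ≤ z) (k : ℕ) : 0 ≤ abelPoly x z k := by
  cases k with
  | zero => simp [abelPoly]
  | succ k => rw [abelPoly]; positivity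

lemma abelPoly_le_pow {x z : ℝ} (hx : 0 ≤ x) (hz : 0 ≤ z) (k : ℕ) :
    abelPoly x z k ≤ (x + z * k) ^ k := by
  cases k with
  | zero => simp [abelPoly]
  | succ k =>
    rw [abelPoly, pow_succ']
    gcongr
    exact le_add_of_nonneg_right (by positivity)

/-- `jainTerm α β k` is the `k`-th summand of `S(1,α,β)` and `consulTerm α β k` is `α` times the
`k`-th summand of `S(0,α,β)`; `abelPoly` takes care of the exponent `k - 1` at `k = 0`. -/
noncomputable def jainTerm (α β : ℝ) (k : ℕ) : ℝ :=
  (α + β * k) ^ k / k ! * exp (-(α + β * k))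

noncomputable def consulTerm (α β : ℝ) (k : ℕ) : ℝ :=
  abelPoly α β k / k ! * exp (-(α + β * k))

noncomputable def jainSum (α β : ℝ) : ℝ := ∑' k, jainTerm α β k

noncomputable def consulSum (α β : ℝ) : ℝ := ∑' k, consulTerm α β k

section Identities

variable (α β γ : ℝ)

lemma consulTerm_mul (k : ℕ) : consulTerm α β k * (α + β * k) = α * jainTerm α β k := by
  rw [consulTerm, jainTerm]
  linear_combination exp (-(α + β * k)) / k ! * abelPoly_mul α β k

lemma jainTerm_succ_sub_consulTerm_succ (k : ℕ) :
    jainTerm α β (k + 1) - consulTerm α β (k + 1) = β * jainTerm (α + β) β k := by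
  simp only [jainTerm, consulTerm, abelPoly, Nat.factorial_succ]
  push_cast
  field_simp
  ring_nf

lemma sum_consulTerm_mul_jainTerm (n : ℕ) :
    ∑ k ∈ range (n + 1), consulTerm α β k * jainTerm γ β (n - k) = jainTerm (α + γ) β n := by
  have hterm (k) (hk : k ∈ range (n + 1)) : consulTerm α β k * jainTerm γ β (n - k) =
      n.choose k * abelPoly α β k * (γ + β * (n - k : ℕ)) ^ (n - k) *
        (exp (-(α + γ + β * n)) / n !) := by
    have hkn : k ≤ n := Nat.lt_succ_iff.mp (mem_range.mp hk)
    have hexp : exp (-(α + β * k)) * exp (-(γ + β * (n - k : ℕ))) = exp (-(α + γ + β * n)) := by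
      rw [← exp_add]
      push_cast [hkn]
      ring_nf
    rw [consulTerm, jainTerm, Nat.cast_choose ℝ hkn, ← hexp]
    field_simp
  rw [sum_congr rfl hterm, ← sum_mul, abel_identity, jainTerm]
  ring

end Identities

section Bounds

variable {α β : ℝ}

lemma jainTerm_nonneg (hα : 0 ≤ α) (hβ : 0 ≤ β) (k : ℕ) : 0 ≤ jainTerm α β k := by
  rw [jainTerm]; positivity

lemma consulTerm_nonneg (hα : 0 ≤ α) (hβ : 0 ≤ β) (k : ℕ) : 0 ≤ consulTerm α β k := by
  have := abelPoly_nonneg hα hβ k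
  rw [consulTerm]; positivity

lemma consulTerm_le_jainTerm (hα : 0 ≤ α) (hβ : 0 ≤ β) (k : ℕ) :
    consulTerm α β k ≤ jainTerm α β k := by
  rw [consulTerm, jainTerm]
  gcongr
  exact abelPoly_le_pow hα hβ k

-- Chernoff: `(s λ)^k / k! ≤ exp (s λ)` for `λ = α + β k`.
lemma jainTerm_le_exp_mul_pow (hα : 0 ≤ α) (hβ : 0 ≤ β) {s : ℝ} (hs : 0 < s) (k : ℕ) :
    jainTerm α β k ≤ exp ((s - 1) * α) * (exp ((s - 1) * β) / s) ^ k := by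
  have hlam : 0 ≤ α + β * k := by positivity
  have hpow := pow_div_factorial_le_exp _ (mul_nonneg hs.le hlam) k
  calc jainTerm α β k = (s * (α + β * k)) ^ k / k ! * exp (-(α + β * k)) / s ^ k := by
        rw [jainTerm, mul_pow]; field_simp
    _ ≤ exp (s * (α + β * k)) * exp (-(α + β * k)) / s ^ k := by gcongr
    _ = exp ((s - 1) * α) * exp (k * ((s - 1) * β)) / s ^ k := by
        rw [← exp_add, ← exp_add]; ring_nf
    _ = _ := by rw [exp_nat_mul, div_pow]; ring

lemma exists_exp_mul_lt_one_add (hβ0 : 0 ≤ β) (hβ1 : β < 1) {ε : ℝ} (hε : 0 < ε) :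
    ∃ θ, 0 < θ ∧ θ ≤ ε ∧ exp (θ * β) < 1 + θ := by
  set θ := min ε ((1 - β) / 2)
  have hθ : 0 < θ := lt_min hε (by linarith)
  have hθβ : θ ≤ (1 - β) / 2 := min_le_right _ _
  refine ⟨θ, hθ, min_le_left _ _, ?_⟩
  have hθβ' : θ * β ≤ (1 - β) / 2 := by nlinarith
  have hlt : θ * β < 1 := by linarith
  calc exp (θ * β) ≤ 1 / (1 - θ * β) := exp_bound_div_one_sub_of_interval (by positivity) hlt
    _ < 1 + θ := by
      rw [div_lt_iff₀ (by linarith)]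
      nlinarith [mul_pos hθ (show 0 < 1 - β - θ * β by linarith)]

lemma exists_jainTerm_le_geometric (hβ0 : 0 ≤ β) (hβ1 : β < 1) {ε : ℝ} (hε : 0 < ε) :
    ∃ r, 0 ≤ r ∧ r < 1 ∧ ∀ α, 0 ≤ α → ∀ k, jainTerm α β k ≤ exp (ε * α) * r ^ k := by
  obtain ⟨θ, hθ, hθε, hexp⟩ := exists_exp_mul_lt_one_add hβ0 hβ1 hε
  refine ⟨exp (θ * β) / (1 + θ), by positivity, (div_lt_one (by linarith)).mpr hexp,
    fun α hα k ↦ ?_⟩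
  calc jainTerm α β k ≤ exp (θ * α) * (exp (θ * β) / (1 + θ)) ^ k := by
        simpa using jainTerm_le_exp_mul_pow hα hβ0 (s := 1 + θ) (by linarith) k
    _ ≤ exp (ε * α) * (exp (θ * β) / (1 + θ)) ^ k := by gcongr

lemma summable_jainTerm (hα : 0 ≤ α) (hβ0 : 0 ≤ β) (hβ1 : β < 1) : Summable (jainTerm α β) := by
  obtain ⟨r, hr0, hr1, hle⟩ := exists_jainTerm_le_geometric hβ0 hβ1 one_pos
  exact .of_nonneg_of_le (jainTerm_nonneg hα hβ0) (hle α hα)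
    ((summable_geometric_of_lt_one hr0 hr1).mul_left _)

lemma summable_consulTerm (hα : 0 ≤ α) (hβ0 : 0 ≤ β) (hβ1 : β < 1) :
    Summable (consulTerm α β) :=
  .of_nonneg_of_le (consulTerm_nonneg hα hβ0) (consulTerm_le_jainTerm hα hβ0)
    (summable_jainTerm hα hβ0 hβ1)

lemma exists_jainSum_le_mul_exp (hβ0 : 0 ≤ β) (hβ1 : β < 1) {ε : ℝ} (hε : 0 < ε) :
    ∃ C, ∀ α, 0 ≤ α → jainSum α β ≤ C * exp (ε * α) := by
  obtain ⟨r, hr0, hr1, hle⟩ := exists_jainTerm_le_geometric hβ0 hβ1 hε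
  refine ⟨(1 - r)⁻¹, fun α hα ↦ ?_⟩
  rw [mul_comm]
  exact hasSum_le (hle α hα) (summable_jainTerm hα hβ0 hβ1).hasSum
    ((hasSum_geometric_of_lt_one hr0 hr1).mul_left _)

end Bounds

lemma factorial_le_exp_one_mul_sqrt {k : ℕ} (hk : k ≠ 0) :
    (k ! : ℝ) ≤ exp 1 * √k * (k / exp 1) ^ k := by
  obtain ⟨m, rfl⟩ := Nat.exists_eq_add_one_of_ne_zero hk
  have h : Stirling.stirlingSeq (m + 1) ≤ Stirling.stirlingSeq 1 :=
    Stirling.stirlingSeq'_antitone (Nat.zero_le m)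
  rw [Stirling.stirlingSeq_one, Stirling.stirlingSeq, Real.sqrt_mul zero_le_two,
    div_le_div_iff₀ (by positivity) (by positivity)] at h
  have : (0 : ℝ) < √2 := by positivity
  nlinarith [h]

lemma inv_exp_two_mul_le_pow_div_factorial_mul_exp {k : ℕ} (hk : k ≠ 0) {t : ℝ}
    (hkt : k ≤ t) (htk : t ≤ k + 1) : (exp 2 * k)⁻¹ ≤ t ^ k / k ! * exp (-t) := by
  have hk1 : (1 : ℝ) ≤ k := Nat.one_le_cast.mpr (Nat.one_le_iff_ne_zero.mpr hk)
  have hfact : (k ! : ℝ) ≤ exp 1 * k * (k / exp 1) ^ k := by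
    refine (factorial_le_exp_one_mul_sqrt hk).trans ?_
    gcongr
    exact (sqrt_le_left (by positivity)).mpr (by nlinarith)
  have hexp : exp (-(k + 1)) = (exp 1 ^ (k + 1))⁻¹ := by
    rw [← exp_nat_mul, ← exp_neg]; push_cast; ring_nf
  calc (exp 2 * k)⁻¹ = k ^ k / (exp 1 * k * (k / exp 1) ^ k) * exp (-(k + 1)) := by
        rw [hexp, show (2 : ℝ) = 1 + 1 by norm_num, exp_add, div_pow]
        field_simp
        ring
    _ ≤ t ^ k / k ! * exp (-t) := by
        have ht : 0 ≤ t := by linarith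
        gcongr

section Sums

variable {α β γ : ℝ}

lemma jainSum_pos (hα : 0 ≤ α) (hβ0 : 0 ≤ β) (hβ1 : β < 1) : 0 < jainSum α β :=
  (summable_jainTerm hα hβ0 hβ1).tsum_pos (jainTerm_nonneg hα hβ0) 0 (by simp [jainTerm, exp_pos])

lemma consulSum_pos (hα : 0 ≤ α) (hβ0 : 0 ≤ β) (hβ1 : β < 1) : 0 < consulSum α β :=
  (summable_consulTerm hα hβ0 hβ1).tsum_pos (consulTerm_nonneg hα hβ0) 0
    (by simp [consulTerm, abelPoly, exp_pos])

lemma consulSum_le_jainSum (hα : 0 ≤ α) (hβ0 : 0 ≤ β) (hβ1 : β < 1) :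
    consulSum α β ≤ jainSum α β :=
  (summable_consulTerm hα hβ0 hβ1).tsum_le_tsum (consulTerm_le_jainTerm hα hβ0)
    (summable_jainTerm hα hβ0 hβ1)

lemma consulSum_mul_jainSum (hα : 0 ≤ α) (hγ : 0 ≤ γ) (hβ0 : 0 ≤ β) (hβ1 : β < 1) :
    consulSum α β * jainSum γ β = jainSum (α + γ) β := by
  rw [consulSum, jainSum, jainSum, tsum_mul_tsum_eq_tsum_sum_range_of_summable_norm
    (summable_consulTerm hα hβ0 hβ1).norm (summable_jainTerm hγ hβ0 hβ1).norm]
  exact tsum_congr (sum_consulTerm_mul_jainTerm α β γ)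

lemma jainSum_eq_consulSum_add (hα : 0 ≤ α) (hβ0 : 0 ≤ β) (hβ1 : β < 1) :
    jainSum α β = consulSum α β + β * jainSum (α + β) β := by
  have hshift : HasSum (fun k ↦ jainTerm α β k - consulTerm α β k) (0 + β * jainSum (α + β) β) := by
    convert HasSum.zero_add (f := fun k ↦ jainTerm α β k - consulTerm α β k) ?_
    · simp [jainTerm, consulTerm, abelPoly]
    · simp only [jainTerm_succ_sub_consulTerm_succ]
      exact (summable_jainTerm (by positivity) hβ0 hβ1).hasSum.mul_left β
  have := ((summable_jainTerm hα hβ0 hβ1).hasSum.sub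
    (summable_consulTerm hα hβ0 hβ1).hasSum).unique hshift
  rw [jainSum, consulSum]
  linarith

lemma consulSum_zero_left : consulSum 0 β = 1 := by
  rw [consulSum, tsum_eq_single 0 fun k hk ↦ ?_]
  · simp [consulTerm, abelPoly]
  · obtain ⟨m, rfl⟩ := Nat.exists_eq_add_one_of_ne_zero hk
    simp [consulTerm, abelPoly]

lemma consulSum_add (hα : 0 ≤ α) (hγ : 0 ≤ γ) (hβ0 : 0 ≤ β) (hβ1 : β < 1) :
    consulSum (α + γ) β = consulSum α β * consulSum γ β := by
  refine mul_right_cancel₀ (jainSum_pos zero_le_one hβ0 hβ1).ne' ?_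
  rw [consulSum_mul_jainSum (by positivity) zero_le_one hβ0 hβ1, mul_assoc,
    consulSum_mul_jainSum hγ zero_le_one hβ0 hβ1, consulSum_mul_jainSum hα (by positivity) hβ0 hβ1,
    add_assoc]

lemma consulSum_nat_mul (hα : 0 ≤ α) (hβ0 : 0 ≤ β) (hβ1 : β < 1) (n : ℕ) :
    consulSum (n * α) β = consulSum α β ^ n := by
  induction n with
  | zero => simp [consulSum_zero_left]
  | succ n ih =>
    rw [Nat.cast_succ, add_one_mul, consulSum_add (by positivity) hα hβ0 hβ1, ih, pow_succ]

lemma div_le_consulSum (hβ0 : 0 ≤ β) (hβ1 : β < 1) (hα : 1 - β ≤ α) :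
    (1 - β) ^ 2 / (exp 2 * α) ≤ consulSum α β := by
  have h1β : 0 < 1 - β := by linarith
  have hα0 : 0 < α := by linarith
  set k := ⌊α / (1 - β)⌋₊
  have hk : k ≠ 0 := (Nat.floor_pos.mpr ((one_le_div h1β).mpr hα)).ne'
  have hkα : (1 - β) * k ≤ α := (le_div_iff₀' h1β).mp (Nat.floor_le (by positivity))
  have hαk : α < (1 - β) * (k + 1) := (div_lt_iff₀' h1β).mp (Nat.lt_floor_add_one _)
  have hlam : 0 < α + β * k := by positivity
  have hlamα : (1 - β) * (α + β * k) ≤ α := by nlinarith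
  have hterm : (1 - β) ^ 2 / (exp 2 * α) ≤ consulTerm α β k := by
    rw [← mul_le_mul_iff_of_pos_right hlam, consulTerm_mul]
    calc (1 - β) ^ 2 / (exp 2 * α) * (α + β * k) ≤ α * (exp 2 * k)⁻¹ := by
          rw [div_mul_eq_mul_div, div_le_iff₀ (by positivity)]
          field_simp
          nlinarith [mul_le_mul hkα hlamα (by positivity) hα0.le]
      _ ≤ α * jainTerm α β k := by
          gcongr
          exact inv_exp_two_mul_le_pow_div_factorial_mul_exp hk (by nlinarith) (by nlinarith)
  exact hterm.trans ((summable_consulTerm hα0.le hβ0 hβ1).le_tsum k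
    fun j _ ↦ consulTerm_nonneg hα0.le hβ0 j)

end Sums

lemma le_one_of_forall_pow_le_mul_exp {t : ℝ}
    (h : ∀ ε > 0, ∃ C, ∀ᶠ n : ℕ in atTop, t ^ n ≤ C * exp (ε * n)) : t ≤ 1 := by
  by_contra! ht
  have hε : 0 < log t / 2 := half_pos (log_pos ht)
  obtain ⟨C, hC⟩ := h _ hε
  have htend : Tendsto (fun n : ℕ ↦ exp (log t / 2 * n)) atTop atTop :=
    tendsto_exp_atTop.comp (tendsto_natCast_atTop_atTop.const_mul_atTop hε)
  obtain ⟨n, hCn, hn⟩ := ((htend.eventually_gt_atTop C).and hC).exists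
  have hsq : t ^ n = exp (log t / 2 * n) * exp (log t / 2 * n) := by
    rw [← exp_add, ← exp_log (by linarith : 0 < t), ← exp_nat_mul, log_exp]
    ring_nf
  rw [hsq] at hn
  nlinarith [mul_pos (exp_pos (log t / 2 * n)) (sub_pos.mpr hCn)]

section ConsulSumEqOne

variable {α β : ℝ}

lemma consulSum_le_one (hα : 0 < α) (hβ0 : 0 ≤ β) (hβ1 : β < 1) : consulSum α β ≤ 1 := by
  refine le_one_of_forall_pow_le_mul_exp fun ε hε ↦ ?_
  obtain ⟨C, hC⟩ := exists_jainSum_le_mul_exp hβ0 hβ1 (div_pos hε hα)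
  refine ⟨C, .of_forall fun n ↦ ?_⟩
  calc consulSum α β ^ n = consulSum (n * α) β := (consulSum_nat_mul hα.le hβ0 hβ1 n).symm
    _ ≤ jainSum (n * α) β := consulSum_le_jainSum (by positivity) hβ0 hβ1
    _ ≤ C * exp (ε / α * (n * α)) := hC _ (by positivity)
    _ = C * exp (ε * n) := by field_simp

lemma one_le_consulSum (hα : 0 < α) (hβ0 : 0 ≤ β) (hβ1 : β < 1) : 1 ≤ consulSum α β := by
  have h1β : 0 < 1 - β := by linarith
  rw [← inv_le_one₀ (consulSum_pos hα.le hβ0 hβ1)]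
  refine le_one_of_forall_pow_le_mul_exp fun ε hε ↦ ⟨exp 2 * α / ((1 - β) ^ 2 * ε), ?_⟩
  filter_upwards [(tendsto_natCast_atTop_atTop.atTop_mul_const hα).eventually_ge_atTop (1 - β)]
    with n hn
  have hn0 : 0 < (n : ℝ) * α := h1β.trans_le hn
  calc (consulSum α β)⁻¹ ^ n = (consulSum (n * α) β)⁻¹ := by
        rw [inv_pow, consulSum_nat_mul hα.le hβ0 hβ1]
    _ ≤ ((1 - β) ^ 2 / (exp 2 * (n * α)))⁻¹ :=
        inv_anti₀ (by positivity) (div_le_consulSum hβ0 hβ1 hn)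
    _ = exp 2 * α / ((1 - β) ^ 2 * ε) * (ε * n) := by field_simp
    _ ≤ exp 2 * α / ((1 - β) ^ 2 * ε) * exp (ε * n) := by
        gcongr
        linarith [add_one_le_exp (ε * n)]

lemma consulSum_eq_one (hα : 0 ≤ α) (hβ0 : 0 ≤ β) (hβ1 : β < 1) : consulSum α β = 1 := by
  rcases hα.eq_or_lt with rfl | hα
  · exact consulSum_zero_left
  · exact le_antisymm (consulSum_le_one hα hβ0 hβ1) (one_le_consulSum hα hβ0 hβ1)

end ConsulSumEqOne

lemma jainSum_eq {α β : ℝ} (hα : 0 ≤ α) (hβ0 : 0 ≤ β) (hβ1 : β < 1) :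
    jainSum α β = 1 / (1 - β) := by
  have h := jainSum_eq_consulSum_add hα hβ0 hβ1
  rw [add_comm α β, ← consulSum_mul_jainSum hβ0 hα hβ0 hβ1, consulSum_eq_one hα hβ0 hβ1,
    consulSum_eq_one hβ0 hβ0 hβ1, one_mul] at h
  rw [eq_div_iff (by linarith)]
  linarith

theorem jain_S1 (α β : ℝ) (hα : 0 < α) (hβ0 : 0 ≤ β) (hβ1 : β < 1) :
    HasSum (fun k : ℕ =>
      (α + β * k) ^ (k : ℕ) / (Nat.factorial k) * Real.exp (-(α + β * k)))
      (1 / (1 - β)) :=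
  jainSum_eq hα.le hβ0 hβ1 ▸ (summable_jainTerm hα.le hβ0 hβ1).hasSum
end

section
/- For α > 0, 0 ≤ β < 1, and r ≥ 1, the series S(r,α,β) satisfies the recursion S(r,α,β) = ∑_{k=0}^∞ β^k · (α + βk) · S(r-1, α+βk, β). -/
/-- `S r α β = ∑_{k=0}^∞ (α+βk)^{k+r-1}/k! · e^{-(α+βk)}`, with the exponent `k+r-1`
written as `(α+βk)^{k+r}/(α+βk)`, valid since `α + βk > 0`. -/
noncomputable def jainS (r : ℕ) (α β : ℝ) : ℝ :=
  ∑' k : ℕ, (α + β * k) ^ (k + r) / (α + β * k) / (Nat.factorial k) * Real.exp (-(α + β * k))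

/-!
Expanding every `S(r-1, α+βk, β)` turns the right-hand side into a double series of nonnegative
terms indexed by `(k, j)`. On the diagonal `k + j = n` all these terms share the base
`x = α + βn`, and since `α + βk = x - βj` their finite sum telescopes (an Abel-type identity) to
`x^{n+1}/n!` times common factors, which is exactly the `n`-th term of `S(r, α, β)`. Nonnegativity
lets the double series be summed along diagonals and then by rows. Convergence of `S` comes from
`x^k/k! ≤ e^{bx}/b^k` with some `b > 1` such that `e^{(b-1)β} < b`, which exists because `β < 1`.
-/

open Finset Real

theorem hasSum_of_hasSum_sum_antidiagonal_of_nonneg {A : Type*} [AddCommMonoid A]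
    [HasAntidiagonal A] {f : A × A → ℝ} {a : ℝ} (hf : 0 ≤ f)
    (h : HasSum (fun n ↦ ∑ p ∈ antidiagonal n, f p) a) : HasSum f a := by
  rw [← HasAntidiagonal.sigmaAntidiagonalEquivProd.hasSum_iff]
  have hfiber (n : A) : HasSum (fun p : antidiagonal n ↦ f p) (∑ p ∈ antidiagonal n, f p) :=
    (antidiagonal n).hasSum f
  have hsum : Summable (f ∘ HasAntidiagonal.sigmaAntidiagonalEquivProd) :=
    (summable_sigma_of_nonneg fun _ ↦ hf _).mpr
      ⟨fun n ↦ (hfiber n).summable, h.summable.congr fun n ↦ ((hfiber n).tsum_eq).symm⟩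
  exact h.unique (hsum.hasSum.sigma hfiber) ▸ hsum.hasSum

theorem sum_antidiagonal_pow_mul_add_mul_pow_div_factorial {K : Type*} [Field K] [CharZero K]
    (α β : K) (n : ℕ) :
    ∑ p ∈ antidiagonal n, β ^ p.1 * (α + β * p.1) * (α + β * n) ^ p.2 / p.2.factorial =
      (α + β * n) ^ (n + 1) / n.factorial := by
  set x := α + β * n
  -- `α + β i = x - β j` on the antidiagonal, so the terms telescope against `w`.
  set w : ℕ → K := fun i ↦ β ^ i * x ^ (n - i + 1) / (n - i).factorial
  have hstep (i : ℕ) (hi : i < n) :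
      β ^ i * (α + β * i) * x ^ (n - i) / (n - i).factorial = w i - w (i + 1) := by
    obtain ⟨m, hm⟩ : ∃ m, n - i = m + 1 := ⟨n - i - 1, by omega⟩
    have hn : (n : K) = i + m + 1 := by exact_mod_cast (by omega : n = i + m + 1)
    simp only [w, hm, show n - (i + 1) = m by omega, Nat.factorial_succ, x, hn]
    push_cast
    field_simp
    ring
  rw [Nat.sum_antidiagonal_eq_sum_range_succ_mk, sum_range_succ, sum_congr rfl
    fun i hi ↦ hstep i (mem_range.mp hi), sum_range_sub']
  simp only [w, x, Nat.sub_self, Nat.sub_zero, Nat.factorial_zero]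
  push_cast
  ring

theorem pow_div_factorial_le_exp_mul_div_pow {x b : ℝ} (hx : 0 ≤ x) (hb : 0 < b) (k : ℕ) :
    x ^ k / k.factorial ≤ exp (b * x) / b ^ k := by
  have := pow_div_factorial_le_exp (b * x) (by positivity) k
  rw [mul_pow] at this
  rw [le_div_iff₀ (by positivity)]
  calc x ^ k / k.factorial * b ^ k = b ^ k * x ^ k / k.factorial := by ring
    _ ≤ exp (b * x) := this

theorem exists_one_lt_exp_sub_one_mul_lt {β : ℝ} (hβ0 : 0 ≤ β) (hβ1 : β < 1) :
    ∃ b : ℝ, 1 < b ∧ exp ((b - 1) * β) < b := by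
  rcases hβ0.eq_or_lt with rfl | hβ
  · exact ⟨2, one_lt_two, by norm_num⟩
  · refine ⟨β⁻¹, one_lt_inv₀ hβ |>.mpr hβ1, ?_⟩
    have : β < exp (β - 1) := by linarith [add_one_lt_exp (x := β - 1) (by linarith)]
    rw [lt_inv_comm₀ (exp_pos _) hβ, ← exp_neg, show -((β⁻¹ - 1) * β) = β - 1 by field_simp; ring]
    exact this

theorem summable_succ_pow_mul_geometric {q : ℝ} (hq0 : 0 < q) (hq1 : q < 1) (r : ℕ) :
    Summable fun k : ℕ ↦ ((k : ℝ) + 1) ^ r * q ^ k := by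
  have h := (summable_nat_add_iff (f := fun n : ℕ ↦ (n : ℝ) ^ r * q ^ n) 1).mpr <|
    summable_pow_mul_geometric_of_norm_lt_one r (by rwa [norm_of_nonneg hq0.le])
  refine (h.mul_left q⁻¹).congr fun k ↦ ?_
  push_cast
  field_simp
  ring

noncomputable def jainSTerm (r : ℕ) (α β : ℝ) (k : ℕ) : ℝ :=
  (α + β * k) ^ (k + r) / (α + β * k) / (Nat.factorial k) * exp (-(α + β * k))

section

variable {α β : ℝ}

theorem jainSTerm_nonneg (r : ℕ) (hα : 0 ≤ α) (hβ : 0 ≤ β) (k : ℕ) : 0 ≤ jainSTerm r α β k := by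
  unfold jainSTerm
  positivity

theorem jainSTerm_le (r : ℕ) (hα : 0 < α) (hβ : 0 ≤ β) {b : ℝ} (hb : 0 < b) (k : ℕ) :
    jainSTerm r α β k ≤
      (α + β) ^ r / α * exp ((b - 1) * α) * (((k : ℝ) + 1) ^ r * (exp ((b - 1) * β) / b) ^ k) := by
  set x := α + β * k
  have hx : α ≤ x := le_add_of_nonneg_right (by positivity)
  have hxr : x ^ r / x ≤ ((α + β) * ((k : ℝ) + 1)) ^ r / α := by
    refine div_le_div₀ (by positivity) (pow_le_pow_left₀ (by positivity) ?_ r) hα hx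
    nlinarith [mul_nonneg hα.le (k.cast_nonneg : (0 : ℝ) ≤ k)]
  have hexp : exp (b * x) * exp (-x) / b ^ k =
      exp ((b - 1) * α) * (exp ((b - 1) * β) / b) ^ k := by
    rw [← exp_add, div_pow, ← exp_nat_mul, mul_div_assoc', ← exp_add]
    congr 2
    ring
  calc jainSTerm r α β k = x ^ r / x * (x ^ k / k.factorial) * exp (-x) := by
        unfold jainSTerm; rw [pow_add]; ring
    _ ≤ ((α + β) * ((k : ℝ) + 1)) ^ r / α * (exp (b * x) / b ^ k) * exp (-x) := by
        gcongr ?_ * ?_ * _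
        exact pow_div_factorial_le_exp_mul_div_pow (hα.le.trans hx) hb k
    _ = ((α + β) * ((k : ℝ) + 1)) ^ r / α * (exp (b * x) * exp (-x) / b ^ k) := by ring
    _ = _ := by rw [hexp, mul_pow]; ring

theorem summable_jainSTerm (r : ℕ) (hα : 0 < α) (hβ0 : 0 ≤ β) (hβ1 : β < 1) :
    Summable (jainSTerm r α β) := by
  obtain ⟨b, hb1, hb⟩ := exists_one_lt_exp_sub_one_mul_lt hβ0 hβ1
  have hb0 : 0 < b := one_pos.trans hb1
  exact Summable.of_nonneg_of_le (jainSTerm_nonneg r hα.le hβ0) (jainSTerm_le r hα hβ0 hb0)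
    ((summable_succ_pow_mul_geometric (by positivity) ((div_lt_one hb0).mpr hb) r).mul_left _)

theorem hasSum_jainSTerm (r : ℕ) (hα : 0 < α) (hβ0 : 0 ≤ β) (hβ1 : β < 1) :
    HasSum (jainSTerm r α β) (jainS r α β) :=
  (summable_jainSTerm r hα hβ0 hβ1).hasSum

theorem sum_antidiagonal_jainSTerm (s n : ℕ) :
    ∑ p ∈ antidiagonal n, β ^ p.1 * (α + β * p.1) * jainSTerm s (α + β * p.1) β p.2 =
      jainSTerm (s + 1) α β n := by
  have hx (p : ℕ × ℕ) (hp : p ∈ antidiagonal n) : α + β * p.1 + β * p.2 = α + β * n := by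
    rw [← mem_antidiagonal.mp hp]
    push_cast
    ring
  calc ∑ p ∈ antidiagonal n, β ^ p.1 * (α + β * p.1) * jainSTerm s (α + β * p.1) β p.2
      = ∑ p ∈ antidiagonal n, (α + β * n) ^ s / (α + β * n) * exp (-(α + β * n)) *
          (β ^ p.1 * (α + β * p.1) * (α + β * n) ^ p.2 / p.2.factorial) :=
        sum_congr rfl fun p hp ↦ by unfold jainSTerm; rw [hx p hp, pow_add]; ring
    _ = jainSTerm (s + 1) α β n := by
        rw [← mul_sum, sum_antidiagonal_pow_mul_add_mul_pow_div_factorial, jainSTerm]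
        ring

end

theorem jain_S_recursion (α β : ℝ) (r : ℕ) (hr : 1 ≤ r)
    (hα : 0 < α) (hβ0 : 0 ≤ β) (hβ1 : β < 1) :
    HasSum (fun k : ℕ => β ^ k * (α + β * k) * jainS (r - 1) (α + β * k) β)
      (jainS r α β) := by
  obtain ⟨s, rfl⟩ := Nat.exists_eq_add_of_le' hr
  have hdouble : HasSum (fun p : ℕ × ℕ ↦ β ^ p.1 * (α + β * p.1) * jainSTerm s (α + β * p.1) β p.2)
      (jainS (s + 1) α β) :=
    hasSum_of_hasSum_sum_antidiagonal_of_nonneg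
      (fun p ↦ mul_nonneg (by positivity) (jainSTerm_nonneg s (by positivity) hβ0 p.2))
      (by simpa only [sum_antidiagonal_jainSTerm] using hasSum_jainSTerm (s + 1) hα hβ0 hβ1)
  refine hdouble.prod_fiberwise fun k ↦ ?_
  simpa using (hasSum_jainSTerm s (by positivity) hβ0 hβ1).mul_left (β ^ k * (α + β * k))
end

section
/- For n ≥ 1, x > 0, 0 ≤ β < 1, and any natural number m ≥ 1, the m-th Jain moment satisfies ∑_{k=0}^∞ (k/n)^m·L_{n,k}^{(β)}(x) = (y/n^m)·∑_{r=1}^{m} S₂(m,r)·S(r, y + rβ, β), where y = nx, S₂(m,r) are the Stirling numbers of the second kind, and S(r,α,β) = ∑_{k=0}^∞ (α+βk)^{k+r-1}/k! · e^{-(α+βk)}. -/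
noncomputable def jainL (n : ℕ) (β x : ℝ) (k : ℕ) : ℝ :=
  n * x * ((n * x + k * β) ^ (k : ℕ) / (n * x + k * β)) / (Nat.factorial k) *
    Real.exp (-(n * x + k * β))

/-- Stirling numbers of the second kind. -/
def stirling2 : ℕ → ℕ → ℕ
  | 0, 0 => 1
  | 0, _ + 1 => 0
  | _ + 1, 0 => 0
  | n + 1, k + 1 => (k + 1) * stirling2 n (k + 1) + stirling2 n k

/-!
Expanding `k ^ m` in falling factorials, `k ^ m = ∑ r, S₂(m, r) k(k-1)⋯(k-r+1)`, splits the
moment series into the series `∑ k, k(k-1)⋯(k-r+1) L_{n,k}^{(β)}(x)`. In the `r`-th one,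
`k(k-1)⋯(k-r+1) / k! = 1 / (k-r)!`, so the shift `k = j + r` turns it into `y · S(r, y + rβ, β)`.
The series converge because `t ^ k / k! ≤ e^{ct} / c^k` for every `c > 0`, which bounds the
terms of `S(r, α, β)` by a polynomial in `k` times `(e^{(c-1)β} / c) ^ k`, and for `β < 1` some
`c` makes this ratio smaller than `1`.
-/

open Finset Real
open scoped Nat

theorem stirling2_eq_stirlingSecond : ∀ m r : ℕ, stirling2 m r = Nat.stirlingSecond m r
  | 0, 0 => rfl
  | 0, _ + 1 => rfl
  | _ + 1, 0 => rfl
  | m + 1, r + 1 => by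
    rw [stirling2, Nat.stirlingSecond_succ_succ, stirling2_eq_stirlingSecond m (r + 1),
      stirling2_eq_stirlingSecond m r]

theorem Nat.mul_descFactorial (k r : ℕ) :
    k * k.descFactorial r = k.descFactorial (r + 1) + r * k.descFactorial r := by
  rcases le_or_gt r k with h | h
  · rw [Nat.descFactorial_succ, ← Nat.add_mul, Nat.sub_add_cancel h]
  · simp [Nat.descFactorial_eq_zero_iff_lt.mpr h]

theorem Nat.pow_eq_sum_stirlingSecond_mul_descFactorial (m k : ℕ) :
    k ^ m = ∑ r ∈ range (m + 1), m.stirlingSecond r * k.descFactorial r := by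
  induction m with
  | zero => simp
  | succ m ih =>
    -- `r · S(m, r)` reindexed by `r ↦ r + 1`: both end terms vanish
    have hshift : ∑ r ∈ range (m + 1), r * m.stirlingSecond r * k.descFactorial r =
        ∑ r ∈ range (m + 1), (r + 1) * m.stirlingSecond (r + 1) * k.descFactorial (r + 1) := by
      rw [sum_range_succ', sum_range_succ (fun r => (r + 1) * _ * _),
        Nat.stirlingSecond_eq_zero_of_lt m.lt_succ_self]
      simp
    calc k ^ (m + 1) = ∑ r ∈ range (m + 1), m.stirlingSecond r * (k * k.descFactorial r) := by
          rw [pow_succ', ih, mul_sum]; exact sum_congr rfl fun r _ => by ring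
      _ = ∑ r ∈ range (m + 1), m.stirlingSecond r * k.descFactorial (r + 1) +
            ∑ r ∈ range (m + 1), r * m.stirlingSecond r * k.descFactorial r := by
          rw [← sum_add_distrib]
          exact sum_congr rfl fun r _ => by rw [Nat.mul_descFactorial]; ring
      _ = ∑ r ∈ range (m + 2), (m + 1).stirlingSecond r * k.descFactorial r := by
          rw [hshift, ← sum_add_distrib, sum_range_succ' _ (m + 1), Nat.stirlingSecond_succ_zero]
          simp only [Nat.stirlingSecond_succ_succ, zero_mul, add_zero]
          exact sum_congr rfl fun r _ => by ring

theorem cast_pow_eq_sum_stirling2_mul_descFactorial {R : Type*} [CommSemiring R] {m : ℕ}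
    (hm : 1 ≤ m) (k : ℕ) :
    (k : R) ^ m = ∑ r ∈ Icc 1 m, (stirling2 m r : R) * (k.descFactorial r : R) := by
  obtain ⟨m, rfl⟩ := Nat.exists_eq_add_of_le' hm
  rw [← Nat.cast_pow, Nat.pow_eq_sum_stirlingSecond_mul_descFactorial, range_eq_Ico,
    sum_eq_sum_Ico_succ_bot (by omega), Nat.stirlingSecond_succ_zero, zero_mul, zero_add,
    Ico_add_one_right_eq_Icc]
  simp [stirling2_eq_stirlingSecond]

theorem pow_div_factorial_le_exp_mul_div_pow_s12 {t c : ℝ} (ht : 0 ≤ t) (hc : 0 < c) (k : ℕ) :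
    t ^ k / k ! ≤ exp (c * t) / c ^ k := by
  have h := pow_div_factorial_le_exp (c * t) (by positivity) k
  rw [mul_pow, mul_div_assoc] at h
  exact (le_div_iff₀' (by positivity)).mpr h

-- `c = 2 / (1 + β)` works, through `log c ≥ 1 - 1 / c`
theorem exists_exp_sub_one_mul_lt {β : ℝ} (hβ0 : 0 ≤ β) (hβ1 : β < 1) :
    ∃ c > 0, exp ((c - 1) * β) < c := by
  have hc : 0 < 2 / (1 + β) := by positivity
  refine ⟨2 / (1 + β), hc, (lt_log_iff_exp_lt hc).mp ?_⟩
  refine lt_of_lt_of_le ?_ (one_sub_inv_le_log_of_pos hc)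
  rw [inv_div, div_sub_one (by positivity), div_mul_eq_mul_div, div_lt_iff₀ (by positivity)]
  nlinarith

theorem summable_jain_term (p : ℕ) {α β : ℝ} (hα : 0 ≤ α) (hβ0 : 0 ≤ β) (hβ1 : β < 1) :
    Summable fun k : ℕ => (α + β * k) ^ (k + p) / k ! * exp (-(α + β * k)) := by
  obtain ⟨c, hc, hq⟩ := exists_exp_sub_one_mul_lt hβ0 hβ1
  set q := exp ((c - 1) * β) / c
  have hq1 : ‖q‖ < 1 := by
    rw [Real.norm_of_nonneg (by positivity), div_lt_one hc]; exact hq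
  refine ((summable_pow_mul_geometric_of_norm_lt_one p hq1).mul_left
    ((α + 1) ^ p * exp ((c - 1) * α))).of_norm_bounded_eventually_nat ?_
  filter_upwards [Filter.eventually_ge_atTop 1] with k hk
  have hk1 : (1 : ℝ) ≤ k := by exact_mod_cast hk
  set t := α + β * k
  have ht : 0 ≤ t := by positivity
  have hpoly : t ^ p ≤ (α + 1) ^ p * (k : ℝ) ^ p := by
    rw [← mul_pow]; exact pow_le_pow_left₀ ht (by nlinarith) p
  have hexp : exp (c * t) / c ^ k * exp (-t) = exp ((c - 1) * α) * q ^ k := by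
    rw [div_pow, ← exp_nat_mul, div_mul_eq_mul_div, mul_div_assoc', ← exp_add, ← exp_add]
    congr 2; ring
  calc ‖t ^ (k + p) / k ! * exp (-t)‖ = t ^ p * (t ^ k / k ! * exp (-t)) := by
        rw [Real.norm_of_nonneg (by positivity), pow_add]; ring
    _ ≤ ((α + 1) ^ p * (k : ℝ) ^ p) * (exp (c * t) / c ^ k * exp (-t)) := by
        gcongr ?_ * (?_ * _)
        exact pow_div_factorial_le_exp_mul_div_pow_s12 ht hc k
    _ = (α + 1) ^ p * exp ((c - 1) * α) * ((k : ℝ) ^ p * q ^ k) := by rw [hexp]; ring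

theorem hasSum_jainS {r : ℕ} (hr : 1 ≤ r) {α β : ℝ} (hα : 0 < α) (hβ0 : 0 ≤ β) (hβ1 : β < 1) :
    HasSum (fun k : ℕ => (α + β * k) ^ (k + r - 1) / k ! * exp (-(α + β * k))) (jainS r α β) := by
  have hterm (k : ℕ) : (α + β * k) ^ (k + r) / (α + β * k) = (α + β * k) ^ (k + r - 1) := by
    rw [← pow_sub_one_mul (by omega), mul_div_cancel_right₀ _ (by positivity)]
  have hsum := (summable_jain_term (r - 1) hα.le hβ0 hβ1).hasSum
  simp only [← Nat.add_sub_assoc hr] at hsum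
  simpa only [jainS, hterm] using hsum

noncomputable def jainWeight (y β : ℝ) (k : ℕ) : ℝ :=
  (y + k * β) ^ k / (y + k * β) / k ! * exp (-(y + k * β))

theorem jainL_eq_mul_jainWeight (n : ℕ) (β x : ℝ) (k : ℕ) :
    jainL n β x k = n * x * jainWeight (n * x) β k := by
  simp only [jainL, jainWeight]; ring

theorem hasSum_descFactorial_mul_jainWeight {r : ℕ} (hr : 1 ≤ r) {y β : ℝ} (hy : 0 < y)
    (hβ0 : 0 ≤ β) (hβ1 : β < 1) :
    HasSum (fun k : ℕ => (k.descFactorial r : ℝ) * jainWeight y β k) (jainS r (y + r * β) β) := by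
  have hvanish : ∀ k ∉ Set.range (· + r), (k.descFactorial r : ℝ) * jainWeight y β k = 0 := by
    intro k hk
    have hkr : k < r := by
      by_contra! h
      exact hk ⟨k - r, Nat.sub_add_cancel h⟩
    simp [Nat.descFactorial_eq_zero_iff_lt.mpr hkr]
  refine ((add_left_injective r).hasSum_iff hvanish).mp ?_
  refine (hasSum_jainS hr (by positivity) hβ0 hβ1).congr_fun fun j => ?_
  have hfac : ((j + r).descFactorial r : ℝ) / (j + r)! = 1 / j ! := by
    rw [div_eq_div_iff (by positivity) (by positivity), one_mul, ← Nat.cast_mul, mul_comm,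
      ← Nat.factorial_mul_descFactorial (Nat.le_add_left r j), Nat.add_sub_cancel]
  have hbase : y + ((j + r : ℕ) : ℝ) * β = y + r * β + β * j := by push_cast; ring
  have hpow : (y + r * β + β * j) ^ (j + r) / (y + r * β + β * j) =
      (y + r * β + β * j) ^ (j + r - 1) := by
    rw [← pow_sub_one_mul (by omega), mul_div_cancel_right₀ _ (by positivity)]
  calc ((j + r).descFactorial r : ℝ) * jainWeight y β (j + r)
      = ((j + r).descFactorial r : ℝ) / (j + r)! *
          ((y + r * β + β * j) ^ (j + r) / (y + r * β + β * j) * exp (-(y + r * β + β * j))) := by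
        simp only [jainWeight, hbase]; ring
    _ = (y + r * β + β * j) ^ (j + r - 1) / j ! * exp (-(y + r * β + β * j)) := by
        rw [hfac, hpow]; ring

theorem jain_moment_formula (n : ℕ) (hn : 1 ≤ n) (x β : ℝ)
    (hx : 0 < x) (hβ0 : 0 ≤ β) (hβ1 : β < 1) (m : ℕ) (hm : 1 ≤ m)
    (y : ℝ) (hy : y = n * x) :
    HasSum (fun k : ℕ => (k / n : ℝ) ^ m * jainL n β x k)
      (y / (n : ℝ) ^ m *
        ∑ r ∈ Finset.Icc 1 m, (stirling2 m r : ℝ) * jainS r (y + r * β) β) := by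
  have hy0 : 0 < y := by rw [hy]; positivity
  have hterms : ∀ r ∈ Icc 1 m, HasSum
      (fun k : ℕ => (stirling2 m r : ℝ) * ((k.descFactorial r : ℝ) * jainWeight y β k))
      (stirling2 m r * jainS r (y + r * β) β) := fun r hr =>
    (hasSum_descFactorial_mul_jainWeight (mem_Icc.mp hr).1 hy0 hβ0 hβ1).mul_left _
  refine ((hasSum_sum hterms).mul_left (y / (n : ℝ) ^ m)).congr_fun fun k => ?_
  rw [jainL_eq_mul_jainWeight, ← hy, div_pow, cast_pow_eq_sum_stirling2_mul_descFactorial hm,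
    sum_div, sum_mul, mul_sum]
  exact sum_congr rfl fun r _ => by ring
end
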